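/- arXiv:math/0703491 — 2 statements merged into one kernel-verified Lean document; each statement's English description precedes it below -/
import Mathlib

section
/- (Super Nakayama, part iii) Let $A$ be a local supercommutative ring with maximal homogeneous ideal $m$. Every finitely generated projective module $E$ over the ungraded ring $A$ is free, and any family of lifts of a basis of $E/mE$ over $A/m$ is a basis of $E$. -/
set_option synthInstance.maxHeartbeats 1000000
set_option maxHeartbeats 1000000

noncomputable section

/-- A (ℤ/2-graded) ring is supercommutative when homogeneous elements commute up to
the sign rule `a b = (-1)^{|a||b|} b a`. -/
def SuperCommutative {A : Type*} [Ring A] (𝒜 : ZMod 2 → AddSubgroup A) : Prop :=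
  ∀ (i j : ZMod 2) (a b : A), a ∈ 𝒜 i → b ∈ 𝒜 j →
    a * b = (if i = 1 ∧ j = 1 then -(b * a) else b * a)

/-- The submodule `m • N` (stated so as to make sense over a noncommutative ring). -/
def idealSmul {A : Type*} [Ring A] (m : Ideal A) {E : Type*} [AddCommGroup E]
    [Module A E] (N : Submodule A E) : Submodule A E :=
  Submodule.span A {x : E | ∃ a ∈ m, ∃ y ∈ N, x = a • y}

/-!
Since `A` is local, `m` is its Jacobson radical, and Nakayama's lemma holds for it over any ring.
It shows that the `eᵢ` span `E`, so `φ : c ↦ ∑ cᵢ eᵢ` maps `Aᵖ` onto `E`. As `E` is projective,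
`φ` has a section `s`, so `K = ker φ` is the image of the projector `id - s ∘ φ` and is finitely
generated. The independence of the `eᵢ` modulo `m` gives `K ≤ m Aᵖ`, and applying the projector
yields `K ≤ m K`, hence `K = 0` by Nakayama.
-/

theorem idealSmul_eq_smul {A : Type*} [Ring A] (m : Ideal A) {E : Type*} [AddCommGroup E]
    [Module A E] (N : Submodule A E) : idealSmul m N = m • N :=
  le_antisymm
    (Submodule.span_le.mpr fun _ ⟨_, ha, _, hy, hx⟩ => hx ▸ Submodule.smul_mem_smul ha hy)
    (Submodule.smul_le.mpr fun a ha y hy => Submodule.subset_span ⟨a, ha, y, hy, rfl⟩)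

theorem Ring.jacobson_eq_of_forall_le {A : Type*} [Ring A] {m : Ideal A}
    (hlocal : ∀ I : Ideal A, I ≠ ⊤ → I ≤ m) (hmax : m ≠ ⊤) : Ring.jacobson A = m := by
  have hm : m.IsMaximal := Ideal.isMaximal_def.mpr
    ⟨hmax, fun J hJ => by_contra fun hJtop => hJ.not_ge (hlocal J hJtop)⟩
  refine le_antisymm (Ring.jacobson_le_of_isMaximal m) ?_
  rw [Ring.jacobson_eq_sInf_isMaximal]
  exact le_sInf fun I hI => (hI.eq_of_le hmax (hlocal I hI.ne_top)).ge

section Nakayama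

variable {R M : Type*} [Ring R] [AddCommGroup M] [Module R M]

theorem Submodule.eq_top_of_sup_jacobson_smul_eq_top [Module.Finite R M] {N : Submodule R M}
    (h : N ⊔ Ring.jacobson R • ⊤ = ⊤) : N = ⊤ := by
  have hquot : (⊤ : Submodule R (M ⧸ N)) = ⊥ := by
    refine Module.Finite.fg_top.eq_bot_of_le_jacobson_smul ?_
    have h' := (Submodule.map_mkQ_eq_top N _).mpr h
    rw [Submodule.map_smul'', Submodule.map_top, N.range_mkQ] at h'
    exact h'.ge
  simpa using (Submodule.map_mkQ_eq_top N ⊥).mp (by rw [Submodule.map_bot, hquot])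

variable {P : Type*} [AddCommGroup P] [Module R P] {f : M →ₗ[R] P} {g : P →ₗ[R] M}

theorem LinearMap.ker_le_smul_ker_of_comp_eq_id (h : f ∘ₗ g = .id) {I : Ideal R}
    (hI : LinearMap.ker f ≤ I • ⊤) : LinearMap.ker f ≤ I • LinearMap.ker f := by
  set π := LinearMap.id - g ∘ₗ f
  calc LinearMap.ker f ≤ (LinearMap.ker f).map π := fun x hx =>
        ⟨x, hx, by simp [π, LinearMap.mem_ker.mp hx]⟩
    _ ≤ (I • (⊤ : Submodule R M)).map π := Submodule.map_mono hI
    _ = I • LinearMap.ker f := by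
        rw [Submodule.map_smul'', Submodule.map_top, ← LinearMap.ker_eq_range_of_comp_eq_id h]

theorem LinearMap.ker_eq_bot_of_comp_eq_id_of_ker_le_jacobson_smul [Module.Finite R M]
    (h : f ∘ₗ g = .id) (hJ : LinearMap.ker f ≤ Ring.jacobson R • ⊤) : LinearMap.ker f = ⊥ := by
  have hfg : (LinearMap.ker f).FG := by
    rw [LinearMap.ker_eq_range_of_comp_eq_id h, LinearMap.range_eq_map]
    exact Module.Finite.fg_top.map _
  exact hfg.eq_bot_of_le_jacobson_smul (LinearMap.ker_le_smul_ker_of_comp_eq_id h hJ)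

end Nakayama

theorem mem_smul_top_of_forall_mem {R ι : Type*} [Ring R] [Fintype ι] {I : Ideal R}
    {c : ι → R} (hc : ∀ i, c i ∈ I) : c ∈ I • (⊤ : Submodule R (ι → R)) := by
  classical
  rw [pi_eq_sum_univ c]
  exact Submodule.sum_mem _ fun i _ => Submodule.smul_mem_smul (hc i) Submodule.mem_top

theorem super_nakayama_iii_general
    (A : Type*) [Ring A]
    (m : Ideal A)
    (hlocal : ∀ I : Ideal A, I ≠ ⊤ → I ≤ m) (hmax : m ≠ ⊤)
    (E : Type*) [AddCommGroup E] [Module A E] [Module.Finite A E]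
    -- `E` is projective: `E ⊕ F ≅ A^N`
    (F : Type*) [AddCommGroup F] [Module A F] (N : ℕ)
    (proj : Nonempty ((E × F) ≃ₗ[A] (Fin N → A)))
    (p : ℕ) (e : Fin p → E)
    -- the images of the `eᵢ` form a basis of `E/mE` over `A/m`:
    (hspan : Submodule.span A (Set.range e) ⊔ idealSmul m (⊤ : Submodule A E) = ⊤)
    (hindep : ∀ c : Fin p → A,
      (∑ i, c i • e i) ∈ idealSmul m (⊤ : Submodule A E) → ∀ i, c i ∈ m) :
    ∃ b : Module.Basis (Fin p) A E, ∀ i, b i = e i := by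
  obtain ⟨g⟩ := proj
  have : Module.Projective A E := .of_split (M := Fin N → A)
    (g.toLinearMap ∘ₗ .inl A E F) (.fst A E F ∘ₗ g.symm.toLinearMap) (by ext; simp)
  rw [idealSmul_eq_smul, ← Ring.jacobson_eq_of_forall_le hlocal hmax] at hspan hindep
  let φ := Fintype.linearCombination A e
  have hspan_top : Submodule.span A (Set.range e) = ⊤ :=
    Submodule.eq_top_of_sup_jacobson_smul_eq_top hspan
  obtain ⟨s, hs⟩ := φ.exists_rightInverse_of_surjective
    (by rw [Fintype.range_linearCombination, hspan_top])
  have hker : LinearMap.ker φ = ⊥ :=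
    LinearMap.ker_eq_bot_of_comp_eq_id_of_ker_le_jacobson_smul hs fun c hc =>
      mem_smul_top_of_forall_mem (hindep c (by
        rw [← Fintype.linearCombination_apply, LinearMap.mem_ker.mp hc]; exact zero_mem _))
  have hli : LinearIndependent A e :=
    linearIndependent_iff_injective_fintypeLinearCombination.mpr (LinearMap.ker_eq_bot.mp hker)
  exact ⟨.mk hli hspan_top.ge, Module.Basis.mk_apply hli _⟩

/-- Super Nakayama, part (iii): over a local supercommutative ring `A`, a finitely
generated projective module `E` (i.e. `E ⊕ F ≅ A^N` for some `F`) is free; moreover any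
family of lifts of a basis of `E/mE` over `A/m` is a basis of `E`. -/
theorem super_nakayama_iii
    (A : Type*) [Ring A] (𝒜 : ZMod 2 → AddSubgroup A) [GradedRing 𝒜]
    (hsc : SuperCommutative 𝒜)
    (m : Ideal A)
    (hhom : ∀ (i : ZMod 2), ∀ a ∈ m, (DirectSum.decompose 𝒜 a i : A) ∈ m)
    (hlocal : ∀ I : Ideal A, I ≠ ⊤ → I ≤ m) (hmax : m ≠ ⊤)
    (E : Type*) [AddCommGroup E] [Module A E] [Module.Finite A E]
    -- `E` is projective: `E ⊕ F ≅ A^N`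
    (F : Type*) [AddCommGroup F] [Module A F] (N : ℕ)
    (proj : Nonempty ((E × F) ≃ₗ[A] (Fin N → A)))
    (p : ℕ) (e : Fin p → E)
    -- the images of the `eᵢ` form a basis of `E/mE` over `A/m`:
    (hspan : Submodule.span A (Set.range e) ⊔ idealSmul m (⊤ : Submodule A E) = ⊤)
    (hindep : ∀ c : Fin p → A,
      (∑ i, c i • e i) ∈ idealSmul m (⊤ : Submodule A E) → ∀ i, c i ∈ m) :
    ∃ b : Module.Basis (Fin p) A E, ∀ i, b i = e i :=
  super_nakayama_iii_general A m hlocal hmax E F N proj p e hspan hindep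
end
end

section
/- (Stabilizer theorem) Let $G$ be an affine algebraic supergroup over $k$ acting on an affine supervariety $X$ via $\rho: G \times X \to X$, and let $u: k[X] \to k$ be a $k$-point of $X$ with maximal ideal $m_u = \ker u$. Let $\tilde\tau: k[X] \to k[G]$ be the comorphism of the orbit map $g \mapsto g\cdot u$, and let $I \subseteq k[G]$ be the ideal generated by $\tilde\tau(m_u)$. Then for every commutative superalgebra $A$, the stabilizer $\{g \in \mathrm{Hom}(k[G],A) : g\cdot u_A = u_A\}$ equals $\mathrm{Hom}(k[G]/I, A)$; i.e., a homomorphism $g: k[G] \to A$ stabilizes $u$ if and only if $g$ vanishes on $I$. In particular the stabilizer functor is representable by the affine superscheme with coordinate ring $k[G]/I$. -/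
set_option synthInstance.maxHeartbeats 1000000
set_option maxHeartbeats 1000000

open TensorProduct

noncomputable section

/-- The comorphism `τ̃ = (id ⊗ u) ∘ ρ*` of the orbit map of a point `u`, attached to a
coaction `ρ* : k[X] → k[G] ⊗ k[X]`. -/
def orbitComorphism (k : Type*) [Field k]
    (H : Type*) [Ring H] [Algebra k H]
    (R : Type*) [Ring R] [Algebra k R]
    (ρ : R →ₐ[k] H ⊗[k] R) (u : R →ₐ[k] k) : R →ₐ[k] H :=
  (Algebra.TensorProduct.rid k k H).toAlgHom.comp
    ((Algebra.TensorProduct.map (AlgHom.id k H) u).comp ρ)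

/-- Theorem 5.2 (the stabilizer theorem): let `G` be an affine supergroup with Hopf
superalgebra `k[G] = H` acting on an affine supervariety `X` with coordinate superalgebra
`k[X] = R` via the coaction `ρ*`, let `u : R → k` be a point with maximal ideal
`m_u = ker u`, and let `I ⊆ H` be the ideal generated by `τ̃(m_u)`.  Then for every
superalgebra `A`, an `A`-point `g : H → A` stabilizes `u` (i.e. `g ∘ τ̃ = u_A`) if and
only if `g` vanishes on `I`; hence the stabilizer functor is represented by `H/I`. -/
theorem stabilizer_theorem
    (k : Type*) [Field k]
    -- the Hopf superalgebra of `G`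
    (H : Type*) [Ring H] [HopfAlgebra k H]
    (𝒜 : ZMod 2 → AddSubgroup H) [GradedRing 𝒜] (hscH : SuperCommutative 𝒜)
    -- the coordinate superalgebra of `X`
    (R : Type*) [Ring R] [Algebra k R]
    (ℬ : ZMod 2 → AddSubgroup R) [GradedRing ℬ] (hscR : SuperCommutative ℬ)
    -- the coaction of `k[G]` on `k[X]` and the point `u`
    (ρ : R →ₐ[k] H ⊗[k] R) (u : R →ₐ[k] k)
    -- a superalgebra `A`
    (A : Type*) [Ring A] [Algebra k A] (𝒞 : ZMod 2 → AddSubgroup A) [GradedRing 𝒞]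
    (hscA : SuperCommutative 𝒞)
    (g : H →ₐ[k] A) :
    letI τ : R →ₐ[k] H := orbitComorphism k H R ρ u
    letI I : Ideal H := Ideal.span (τ '' (RingHom.ker u : Set R))
    -- `g` stabilizes `u`, i.e. `g ∘ τ̃ = u_A`, iff `g` vanishes on `I`
    (g.comp τ = (Algebra.ofId k A).comp u) ↔ (∀ x ∈ I, g x = 0) := by
  set τ : R →ₐ[k] H := orbitComorphism k H R ρ u with hτ
  set I : Ideal H := Ideal.span (τ '' (RingHom.ker u : Set R)) with hI
  constructor
  · intro h x hx
    have hle : I ≤ RingHom.ker (g : H →+* A) := by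
      rw [Ideal.span_le]
      rintro _ ⟨y, hy, rfl⟩
      have hy0 : u y = 0 := hy
      have := congrArg (fun f : R →ₐ[k] A => f y) h
      simpa [RingHom.mem_ker, AlgHom.comp_apply, Algebra.ofId_apply, hy0] using this
    exact hle hx
  · intro h
    ext r
    have hker : r - algebraMap k R (u r) ∈ RingHom.ker u := by
      simp [RingHom.mem_ker, map_sub]
    have hmem : τ (r - algebraMap k R (u r)) ∈ I :=
      Ideal.subset_span ⟨_, hker, rfl⟩
    have h0 := h _ hmem
    rw [map_sub, map_sub, sub_eq_zero] at h0
    simpa [AlgHom.comp_apply, Algebra.ofId_apply, AlgHom.commutes] using h0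
end
end
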